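/- Let A be a Noetherian ring, let α be an ideal, let f, g ∈ A, and let W be a closed subset of Spec(A) such that V(α + (g)) ⊆ W. Then (α + (fg))¬W = (α + (f))¬W. -/

import Mathlib

open PrimeSpectrum

/-- The multiplicative set `S`: the complement of the union of the associated
primes `p` of `A ⧸ I` such that `V(p) ⊄ W`. -/
def gapMonoid {A : Type*} [CommRing A] (I : Ideal A) (W : Set (PrimeSpectrum A)) :
    Submonoid A where
  carrier := {s : A | ∀ p ∈ associatedPrimes A (A ⧸ I),
      ¬ PrimeSpectrum.zeroLocus (p : Set A) ⊆ W → s ∉ p}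
  one_mem' := by
    intro p hp _ h1
    exact hp.isPrime.ne_top ((Ideal.eq_top_iff_one p).mpr h1)
  mul_mem' := by
    intro a b ha hb p hp hW hab
    rcases hp.isPrime.mem_or_mem hab with h | h
    · exact ha p hp hW h
    · exact hb p hp hW h

/-- The gap ideal `I ¬ W := S⁻¹I ∩ A`. -/
def gapIdeal {A : Type*} [CommRing A] (I : Ideal A) (W : Set (PrimeSpectrum A)) :
    Ideal A :=
  (I.map (algebraMap A (Localization (gapMonoid I W)))).comap
    (algebraMap A (Localization (gapMonoid I W)))

lemma mem_gapIdeal_iff {A : Type*} [CommRing A] (I : Ideal A) (W : Set (PrimeSpectrum A))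
    (a : A) : a ∈ gapIdeal I W ↔ ∃ s ∈ gapMonoid I W, s * a ∈ I := by
  constructor
  · intro ha
    obtain ⟨⟨b, s⟩, hb⟩ := (IsLocalization.mem_map_algebraMap_iff (gapMonoid I W)
      (Localization (gapMonoid I W))).mp (Ideal.mem_comap.mp ha)
    rw [← map_mul] at hb
    obtain ⟨c, hc⟩ := (IsLocalization.eq_iff_exists (gapMonoid I W)
      (Localization (gapMonoid I W))).mp hb
    refine ⟨(c * s : A), (c * s).2, ?_⟩
    have : (c : A) * (a * s) = c * b := hc
    have hcb : (c : A) * b ∈ I := I.mul_mem_left c b.2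
    have : (c : A) * s * a = (c : A) * b := by linear_combination this
    rwa [this]
  · rintro ⟨s, hs, hsa⟩
    rw [gapIdeal, Ideal.mem_comap]
    refine (IsLocalization.mem_map_algebraMap_iff (gapMonoid I W)
      (Localization (gapMonoid I W))).mpr ⟨⟨⟨s * a, hsa⟩, ⟨s, hs⟩⟩, ?_⟩
    simp [← map_mul, mul_comm]

/-- Characterization of associated primes of `A ⧸ I` via colon-type conditions. -/
lemma isAssociatedPrime_quotient_iff {A : Type*} [CommRing A] [IsNoetherianRing A] (I p : Ideal A) :
    IsAssociatedPrime p (A ⧸ I) ↔ p.IsPrime ∧ ∃ x : A, ∀ r : A, r ∈ p ↔ r * x ∈ I := by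
  have key : ∀ (y r : A), r • (Ideal.Quotient.mk I y) = 0 ↔ r * y ∈ I := by
    intro y r
    rw [Algebra.smul_def, Ideal.Quotient.algebraMap_eq, ← map_mul,
      Ideal.Quotient.eq_zero_iff_mem]
  rw [isAssociatedPrime_iff]
  constructor
  · rintro ⟨hp, x, hx⟩
    obtain ⟨y, rfl⟩ := Ideal.Quotient.mk_surjective x
    refine ⟨hp, y, fun r => ?_⟩
    rw [hx, Submodule.mem_colon_singleton, Submodule.mem_bot, key]
  · rintro ⟨hp, x, hx⟩
    refine ⟨hp, Ideal.Quotient.mk I x, ?_⟩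
    ext r
    rw [Submodule.mem_colon_singleton, Submodule.mem_bot, hx, key]

/-- The key transfer: if `g ∉ p`, then `p` is associated to `A ⧸ (α + (fg))`
iff it is associated to `A ⧸ (α + (f))`. -/
lemma isAssociatedPrime_transfer {A : Type*} [CommRing A] [IsNoetherianRing A] (α : Ideal A) (f g : A)
    (p : Ideal A) (hg : g ∉ p) :
    IsAssociatedPrime p (A ⧸ (α + Ideal.span {f * g})) ↔
      IsAssociatedPrime p (A ⧸ (α + Ideal.span {f})) := by
  have hmem : ∀ (w z : A), z ∈ α + Ideal.span {w} ↔ ∃ a ∈ α, ∃ c : A, z = a + c * w := by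
    intro w z
    rw [Submodule.add_eq_sup, Submodule.mem_sup]
    constructor
    · rintro ⟨a, ha, b, hb, rfl⟩
      obtain ⟨c, rfl⟩ := Ideal.mem_span_singleton'.mp hb
      exact ⟨a, ha, c, rfl⟩
    · rintro ⟨a, ha, c, rfl⟩
      exact ⟨a, ha, c * w, Ideal.mem_span_singleton'.mpr ⟨c, rfl⟩, rfl⟩
  have hsub : α + Ideal.span {f * g} ≤ α + Ideal.span {f} := by
    intro z hz
    obtain ⟨a, ha, c, rfl⟩ := (hmem _ _).mp hz
    exact (hmem _ _).mpr ⟨a, ha, c * g, by ring⟩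
  rw [isAssociatedPrime_quotient_iff, isAssociatedPrime_quotient_iff]
  constructor
  · rintro ⟨hp, x, hx⟩
    refine ⟨hp, g * x, fun r => ?_⟩
    constructor
    · intro hr
      have h1 : r * x ∈ α + Ideal.span {f} := hsub ((hx r).mp hr)
      obtain ⟨a, ha, c, hc⟩ := (hmem _ _).mp h1
      exact (hmem _ _).mpr ⟨g * a, α.mul_mem_left g ha, g * c, by linear_combination g * hc⟩
    · intro hr
      obtain ⟨a, ha, c, hc⟩ := (hmem _ _).mp hr
      have h1 : r * g * g * x ∈ α + Ideal.span {f * g} := by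
        refine (hmem _ _).mpr ⟨a * g, α.mul_mem_right g ha, c, ?_⟩
        linear_combination g * hc
      have h2 : r * g * g ∈ p := (hx _).mpr h1
      rcases hp.mem_or_mem h2 with h | h
      · rcases hp.mem_or_mem h with h | h
        · exact h
        · exact absurd h hg
      · exact absurd h hg
  · rintro ⟨hp, x, hx⟩
    refine ⟨hp, g * x, fun r => ?_⟩
    constructor
    · intro hr
      obtain ⟨a, ha, c, hc⟩ := (hmem _ _).mp ((hx r).mp hr)
      exact (hmem _ _).mpr ⟨g * a, α.mul_mem_left g ha, c, by linear_combination g * hc⟩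
    · intro hr
      obtain ⟨a, ha, c, hc⟩ := (hmem _ _).mp hr
      have h1 : r * g * x ∈ α + Ideal.span {f} := by
        refine (hmem _ _).mpr ⟨a, ha, c * g, ?_⟩
        linear_combination hc
      have h2 : r * g ∈ p := (hx _).mpr h1
      rcases hp.mem_or_mem h2 with h | h
      · exact h
      · exact absurd h hg

/-- Lemma 1.3.iv: if `V(α + (g)) ⊆ W`, then `(α + (fg)) ¬ W = (α + (f)) ¬ W`. -/
theorem gapIdeal_mul_gen {A : Type*} [CommRing A] [IsNoetherianRing A]
    (α : Ideal A) (f g : A) (W : Set (PrimeSpectrum A)) (hW : IsClosed W)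
    (h : PrimeSpectrum.zeroLocus ((α + Ideal.span {g} : Ideal A) : Set A) ⊆ W) :
    gapIdeal (α + Ideal.span {f * g}) W = gapIdeal (α + Ideal.span {f}) W := by
  set I₁ := α + Ideal.span {f * g} with hI₁
  set I₂ := α + Ideal.span {f} with hI₂
  have hsub : I₁ ≤ I₂ := by
    refine sup_le le_sup_left ?_
    refine (Ideal.span_singleton_le_iff_mem _).mpr ?_
    exact Ideal.mem_sup_right (Ideal.mem_span_singleton'.mpr ⟨g, by ring⟩)
  have hgood : ∀ p : Ideal A, p.IsPrime → α ≤ p →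
      ¬ PrimeSpectrum.zeroLocus (p : Set A) ⊆ W → g ∉ p := by
    intro p hp hαp hbad hgp
    apply hbad
    intro q hq
    apply h
    simp only [PrimeSpectrum.mem_zeroLocus] at hq ⊢
    have hle : α + Ideal.span {g} ≤ p :=
      sup_le hαp ((Ideal.span_singleton_le_iff_mem _).mpr hgp)
    exact fun z hz => hq (hle hz)
  have hα₁ : ∀ p : Ideal A, p ∈ associatedPrimes A (A ⧸ I₁) → α ≤ p := by
    intro p hp
    have := hp.annihilator_le
    rw [Submodule.annihilator_top, Ideal.annihilator_quotient] at this
    exact le_trans le_sup_left this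
  have hα₂ : ∀ p : Ideal A, p ∈ associatedPrimes A (A ⧸ I₂) → α ≤ p := by
    intro p hp
    have := hp.annihilator_le
    rw [Submodule.annihilator_top, Ideal.annihilator_quotient] at this
    exact le_trans le_sup_left this
  have hmon : ∀ s : A, s ∈ gapMonoid I₁ W ↔ s ∈ gapMonoid I₂ W := by
    intro s
    constructor
    · intro hs p hp hbad
      have hgp : g ∉ p := hgood p hp.isPrime (hα₂ p hp) hbad
      exact hs p ((isAssociatedPrime_transfer α f g p hgp).mpr hp) hbad
    · intro hs p hp hbad
      have hgp : g ∉ p := hgood p hp.isPrime (hα₁ p hp) hbad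
      exact hs p ((isAssociatedPrime_transfer α f g p hgp).mp hp) hbad
  have hgS : g ∈ gapMonoid I₁ W := fun p hp hbad =>
    hgood p hp.isPrime (hα₁ p hp) hbad
  apply le_antisymm
  · intro a ha
    obtain ⟨s, hs, hsa⟩ := (mem_gapIdeal_iff I₁ W a).mp ha
    exact (mem_gapIdeal_iff I₂ W a).mpr ⟨s, (hmon s).mp hs, hsub hsa⟩
  · intro a ha
    obtain ⟨s, hs, hsa⟩ := (mem_gapIdeal_iff I₂ W a).mp ha
    refine (mem_gapIdeal_iff I₁ W a).mpr ⟨g * s, mul_mem hgS ((hmon s).mpr hs), ?_⟩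
    rw [hI₁, Submodule.add_eq_sup, Submodule.mem_sup]
    rw [hI₂, Submodule.add_eq_sup, Submodule.mem_sup] at hsa
    obtain ⟨x, hx, y, hy, hxy⟩ := hsa
    obtain ⟨c, rfl⟩ := Ideal.mem_span_singleton'.mp hy
    exact ⟨g * x, α.mul_mem_left g hx, c * (f * g), Ideal.mem_span_singleton'.mpr ⟨c, rfl⟩,
      by linear_combination g * hxy⟩
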